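/- arXiv:1601.06158 — 2 statements merged into one kernel-verified Lean document; each statement's English description precedes it below -/
import Mathlib

section
/- The large Schröder numbers satisfy the quadratic recurrence relation induced by their generating function: for all n ≥ 1, the Schröder number S(n) equals S(n-1) plus the sum over i+j = n-1 of S(i)·S(j). Here S(0)=1. -/
open Finset PowerSeries

/-- Large Schröder numbers. -/
def schroeder : ℕ → ℕ
  | 0 => 1
  | n + 1 => schroeder n + ∑ i : Fin (n + 1), schroeder i * schroeder (n - i)

/-- The points visited by a path (a list of steps) starting at (0,0). -/
def pts (l : List (ℤ × ℤ)) : List (ℤ × ℤ) :=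
  l.scanl (fun p s => (p.1 + s.1, p.2 + s.2)) (0, 0)

/-- The endpoint of a path starting at (0,0). -/
def endPt (l : List (ℤ × ℤ)) : ℤ × ℤ :=
  ((l.map Prod.fst).sum, (l.map Prod.snd).sum)

/-- All steps are unit steps (1,0) or (0,1). -/
def unitSteps (l : List (ℤ × ℤ)) : Prop := ∀ s ∈ l, s = (1, 0) ∨ s = (0, 1)

/-- All steps are (1,0), (0,1) or (1,1). -/
def schSteps (l : List (ℤ × ℤ)) : Prop := ∀ s ∈ l, s = (1, 0) ∨ s = (0, 1) ∨ s = (1, 1)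

/-- The path stays weakly below the diagonal y = x. -/
def weaklyBelow (l : List (ℤ × ℤ)) : Prop := ∀ p ∈ pts l, p.2 ≤ p.1

/-- The path stays strictly below the diagonal except at its start (0,0). -/
def strictBelowAfterStart (l : List (ℤ × ℤ)) : Prop :=
  ∀ p ∈ pts l, p ≠ (0, 0) → p.2 < p.1

/-- Validity of a path starting at point `p` in a lattice where steps (1,0) and (0,1)
are allowed everywhere and the diagonal step (1,1) is allowed exactly from points
satisfying `D`. -/
def okFrom (D : ℤ × ℤ → Prop) : ℤ × ℤ → List (ℤ × ℤ) → Prop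
  | _, [] => True
  | p, s :: l => (s = (1, 0) ∨ s = (0, 1) ∨ (s = (1, 1) ∧ D p)) ∧
      okFrom D (p.1 + s.1, p.2 + s.2) l

/-- Paths from (0,0) to (n,k) in the Catalan–Schröder lattice L_CS:
diagonal steps allowed from points (a,b) with b ≥ a. -/
def LCS (n k : ℕ) : Set (List (ℤ × ℤ)) :=
  {l | okFrom (fun p => p.1 ≤ p.2) (0, 0) l ∧ endPt l = ((n : ℤ), (k : ℤ))}

/-- Paths from (0,0) to (n,k) in the lattice L*_CS:
diagonal steps allowed only from points (a,b) with b > a. -/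
def LCSstar (n k : ℕ) : Set (List (ℤ × ℤ)) :=
  {l | okFrom (fun p => p.1 < p.2) (0, 0) l ∧ endPt l = ((n : ℤ), (k : ℤ))}

/-- Weakly subdiagonal unit-step paths from (0,0) to (n,k). -/
def CPath (n k : ℕ) : Set (List (ℤ × ℤ)) :=
  {l | unitSteps l ∧ endPt l = ((n : ℤ), (k : ℤ)) ∧ weaklyBelow l}

/-- Weakly subdiagonal paths from (0,0) to (n,k) with steps (1,0),(0,1),(1,1). -/
def SPath (n k : ℕ) : Set (List (ℤ × ℤ)) :=
  {l | schSteps l ∧ endPt l = ((n : ℤ), (k : ℤ)) ∧ weaklyBelow l}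

/-- Number of paths from (0,0) to (n,n) in L_CS. -/
noncomputable def fCS (n : ℕ) : ℕ := Nat.card ↥(LCS n n)

/-- Number of paths from (0,0) to (n,n) in L*_CS. -/
noncomputable def fCSstar (n : ℕ) : ℕ := Nat.card ↥(LCSstar n n)

/-- Generating function of the Catalan numbers. -/
noncomputable def catalanGF : PowerSeries ℤ := PowerSeries.mk fun n => (catalan n : ℤ)

/-- Generating function of the large Schröder numbers. -/
noncomputable def schroederGF : PowerSeries ℤ := PowerSeries.mk fun n => (schroeder n : ℤ)

/-- Generating function F(x) of diagonal path counts in L_CS. -/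
noncomputable def FGF : PowerSeries ℤ := PowerSeries.mk fun n => (fCS n : ℤ)

/-- Generating function F*(x) of diagonal path counts in L*_CS. -/
noncomputable def FstarGF : PowerSeries ℤ := PowerSeries.mk fun n => (fCSstar n : ℤ)

/-- Substitution x ↦ x² in a formal power series: g(x²). -/
noncomputable def subSq (g : PowerSeries ℤ) : PowerSeries ℤ :=
  PowerSeries.mk fun n => if 2 ∣ n then PowerSeries.coeff (R := ℤ) (n / 2) g else 0

/-- Substitution x ↦ x³ in a formal power series: g(x³). -/
noncomputable def subCube (g : PowerSeries ℤ) : PowerSeries ℤ :=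
  PowerSeries.mk fun n => if 3 ∣ n then PowerSeries.coeff (R := ℤ) (n / 3) g else 0

/-!
A Schröder path to `(m + 1, m + 1)` either starts with a diagonal step, followed by a Schröder
path to `(m, m)`, or starts with `(1, 0)` and first returns to the diagonal by a step `(0, 1)`
at some `(i + 1, i + 1)`. In the second case it reads `(1, 0) :: (A ++ (0, 1) :: B)` with `A`, `B`
Schröder paths to `(i, i)` and `(j, j)`, `i + j = m`, and the split is unique because any later
`(0, 1)` step after a diagonal prefix `A` would take `A ++ [(0, 1)]` above the diagonal.
-/

theorem scanl_add_eq_map_add {M : Type*} [AddMonoid M] (l : List M) (q : M) :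
    l.scanl (· + ·) q = (l.scanl (· + ·) 0).map (q + ·) := by
  induction l generalizing q with
  | nil => simp
  | cons s l ih => simp [ih (q + s), ih s, Function.comp_def, add_assoc]

theorem pts_cons (s : ℤ × ℤ) (l : List (ℤ × ℤ)) :
    pts (s :: l) = 0 :: (pts l).map (s + ·) := by
  change (s :: l).scanl (· + ·) 0 = 0 :: (l.scanl (· + ·) 0).map (s + ·)
  rw [List.scanl_cons, zero_add, scanl_add_eq_map_add]

theorem zero_mem_pts (l : List (ℤ × ℤ)) : 0 ∈ pts l := by
  cases l with
  | nil => exact List.mem_singleton_self _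
  | cons s l => simp [pts_cons]

theorem forall_mem_pts_cons {P : ℤ × ℤ → Prop} {s : ℤ × ℤ} {l : List (ℤ × ℤ)} :
    (∀ p ∈ pts (s :: l), P p) ↔ P 0 ∧ ∀ p ∈ pts l, P (s + p) := by
  simp only [pts_cons, List.forall_mem_cons, List.forall_mem_map]

theorem forall_mem_pts_append {P : ℤ × ℤ → Prop} {A B : List (ℤ × ℤ)} :
    (∀ p ∈ pts (A ++ B), P p) ↔ (∀ p ∈ pts A, P p) ∧ ∀ p ∈ pts B, P (A.sum + p) := by
  induction A generalizing P with
  | nil =>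
    have hP : (∀ p ∈ pts [], P p) ↔ P 0 := List.forall_mem_singleton
    simp only [List.nil_append, List.sum_nil, zero_add, hP]
    exact ⟨fun h => ⟨h 0 (zero_mem_pts B), h⟩, And.right⟩
  | cons s A ih =>
    simp only [List.cons_append, forall_mem_pts_cons, ih, List.sum_cons, add_assoc, and_assoc]

theorem endPt_eq_sum (l : List (ℤ × ℤ)) : endPt l = l.sum := by
  induction l with
  | nil => rfl
  | cons s l ih => simp_all [endPt, Prod.ext_iff]

theorem mem_SPath_iff {n k : ℕ} {l : List (ℤ × ℤ)} :
    l ∈ SPath n k ↔ schSteps l ∧ l.sum = ((n : ℤ), (k : ℤ)) ∧ weaklyBelow l := by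
  rw [SPath, Set.mem_ofPred_eq, endPt_eq_sum]

theorem schSteps_cons {s : ℤ × ℤ} {l : List (ℤ × ℤ)} :
    schSteps (s :: l) ↔ (s = (1, 0) ∨ s = (0, 1) ∨ s = (1, 1)) ∧ schSteps l :=
  List.forall_mem_cons

theorem schSteps_append {A B : List (ℤ × ℤ)} : schSteps (A ++ B) ↔ schSteps A ∧ schSteps B :=
  List.forall_mem_append

theorem sum_nonneg_of_schSteps {l : List (ℤ × ℤ)} (h : schSteps l) : 0 ≤ l.sum :=
  List.sum_nonneg fun s hs => by rcases h s hs with rfl | rfl | rfl <;> decide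

theorem length_le_of_schSteps {l : List (ℤ × ℤ)} (h : schSteps l) :
    (l.length : ℤ) ≤ l.sum.1 + l.sum.2 := by
  induction l with
  | nil => simp
  | cons s l ih =>
    obtain ⟨hs, hl⟩ := schSteps_cons.mp h
    have := ih hl
    rcases hs with rfl | rfl | rfl <;> simp <;> omega

theorem SPath_finite (n k : ℕ) : (SPath n k).Finite := by
  let steps : Set (ℤ × ℤ) := {(1, 0), (0, 1), (1, 1)}
  have : Finite steps := Set.toFinite _
  refine ((List.finite_length_le steps (n + k)).image (List.map Subtype.val)).subset ?_
  intro l hl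
  obtain ⟨hsteps, hsum, -⟩ := mem_SPath_iff.mp hl
  have hlen : l.length ≤ n + k := by
    have := length_le_of_schSteps hsteps
    simp only [hsum] at this
    exact_mod_cast this
  lift l to List steps using hsteps
  exact ⟨l, by simpa using hlen, rfl⟩

instance (n k : ℕ) : Finite (SPath n k) := (SPath_finite n k).to_subtype

theorem weaklyBelow_cons_one_one {l : List (ℤ × ℤ)} :
    weaklyBelow ((1, 1) :: l) ↔ weaklyBelow l := by
  simp only [weaklyBelow, forall_mem_pts_cons, Prod.fst_add, Prod.snd_add, Prod.fst_zero,
    Prod.snd_zero, le_refl, add_le_add_iff_left, true_and]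

theorem not_weaklyBelow_append_cons {A B : List (ℤ × ℤ)} (hA : A.sum.1 = A.sum.2) :
    ¬ weaklyBelow (A ++ (0, 1) :: B) := by
  intro h
  have := (forall_mem_pts_cons.mp (forall_mem_pts_append.mp h).2).2 0 (zero_mem_pts B)
  simp only [Prod.fst_add, Prod.snd_add, Prod.fst_zero, Prod.snd_zero] at this
  omega

theorem weaklyBelow_cons_append_cons_iff {A B : List (ℤ × ℤ)} (hA : A.sum.1 = A.sum.2) :
    weaklyBelow ((1, 0) :: (A ++ (0, 1) :: B)) ↔
      (∀ p ∈ pts A, p.2 ≤ p.1 + 1) ∧ weaklyBelow B := by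
  simp only [weaklyBelow, forall_mem_pts_cons, forall_mem_pts_append, Prod.fst_add, Prod.snd_add,
    Prod.fst_zero, Prod.snd_zero, hA, zero_add, add_zero, le_refl, true_and]
  refine and_congr (forall₂_congr fun p _ => ?_)
    ((and_iff_right (by omega)).trans (forall₂_congr fun p _ => ?_)) <;> omega

theorem exists_eq_append_cons_of_descent {t : List (ℤ × ℤ)} (ht : schSteps t) {c : ℤ}
    (hc : 0 ≤ c) (hdesc : c + t.sum.1 < t.sum.2) :
    ∃ A B, t = A ++ (0, 1) :: B ∧ (∀ p ∈ pts A, p.2 ≤ c + p.1) ∧ A.sum.2 = c + A.sum.1 := by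
  induction t generalizing c with
  | nil => simp at hdesc; omega
  | cons s t ih =>
    obtain ⟨hs, ht⟩ := schSteps_cons.mp ht
    by_cases hstop : s = (0, 1) ∧ c = 0
    · obtain ⟨rfl, rfl⟩ := hstop
      exact ⟨[], t, rfl, by simp [pts], by simp⟩
    · have hc' : 0 ≤ c + s.1 - s.2 := by
        rcases hs with rfl | rfl | rfl <;> simp_all <;> omega
      obtain ⟨A, B, rfl, hA, hAsum⟩ := ih ht hc' (by simp at hdesc; omega)
      refine ⟨s :: A, B, rfl, forall_mem_pts_cons.mpr ⟨by simpa, fun p hp => ?_⟩, ?_⟩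
      · have := hA p hp
        simp only [Prod.fst_add, Prod.snd_add]
        omega
      · simp only [List.sum_cons, Prod.fst_add, Prod.snd_add]
        omega

theorem eq_nil_of_weaklyBelow_append {A C B B' : List (ℤ × ℤ)} (hA : A.sum.1 = A.sum.2)
    (hw : weaklyBelow (A ++ C)) (h : (0, 1) :: B = C ++ (0, 1) :: B') : C = [] := by
  cases C with
  | nil => rfl
  | cons s C =>
    obtain ⟨rfl, -⟩ := List.cons_eq_cons.mp h
    exact absurd hw (not_weaklyBelow_append_cons hA)

theorem eq_and_eq_of_append_cons_eq {A A' B B' : List (ℤ × ℤ)}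
    (hA : weaklyBelow A) (hAd : A.sum.1 = A.sum.2)
    (hA' : weaklyBelow A') (hA'd : A'.sum.1 = A'.sum.2)
    (h : A ++ (0, 1) :: B = A' ++ (0, 1) :: B') : A = A' ∧ B = B' := by
  rcases List.append_eq_append_iff.mp h with ⟨C, rfl, hC⟩ | ⟨C, rfl, hC⟩
  · obtain rfl := eq_nil_of_weaklyBelow_append hAd hA' hC
    simpa using hC
  · obtain rfl := eq_nil_of_weaklyBelow_append hA'd hA hC
    simpa using hC.symm

theorem exists_mem_SPath_of_sum_fst_eq_snd {l : List (ℤ × ℤ)} (hs : schSteps l)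
    (hw : weaklyBelow l) (hd : l.sum.1 = l.sum.2) : ∃ i : ℕ, l ∈ SPath i i := by
  have hnonneg : 0 ≤ l.sum.1 := (Prod.le_def.mp (sum_nonneg_of_schSteps hs)).1
  refine ⟨l.sum.1.toNat, mem_SPath_iff.mpr ⟨hs, ?_, hw⟩⟩
  rw [Int.toNat_of_nonneg hnonneg]
  exact Prod.ext rfl hd.symm

def SPathDecomp (m : ℕ) : Type :=
  ↥(SPath m m) ⊕ Σ p : antidiagonal m, ↥(SPath p.1.1 p.1.1) × ↥(SPath p.1.2 p.1.2)

namespace SPathDecomp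

variable {m : ℕ}

def path : SPathDecomp m → List (ℤ × ℤ)
  | .inl A => (1, 1) :: A.1
  | .inr ⟨_, A, B⟩ => (1, 0) :: (A.1 ++ (0, 1) :: B.1)

theorem path_mem (x : SPathDecomp m) : x.path ∈ SPath (m + 1) (m + 1) := by
  rcases x with ⟨A, hA⟩ | ⟨⟨⟨i, j⟩, hij⟩, ⟨A, hA⟩, ⟨B, hB⟩⟩
  · obtain ⟨hAs, hAsum, hAw⟩ := mem_SPath_iff.mp hA
    refine mem_SPath_iff.mpr
      ⟨schSteps_cons.mpr ⟨by simp, hAs⟩, ?_, weaklyBelow_cons_one_one.mpr hAw⟩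
    simp [path, hAsum, add_comm]
  · obtain ⟨hAs, hAsum, hAw⟩ := mem_SPath_iff.mp hA
    obtain ⟨hBs, hBsum, hBw⟩ := mem_SPath_iff.mp hB
    have hAd : A.sum.1 = A.sum.2 := by simp [hAsum]
    rw [HasAntidiagonal.mem_antidiagonal] at hij
    refine mem_SPath_iff.mpr ⟨?_, ?_, ?_⟩
    · simp [path, schSteps_cons, schSteps_append, hAs, hBs]
    · simp only [path, List.sum_cons, List.sum_append, hAsum, hBsum, ← hij, Prod.ext_iff]
      push_cast
      constructor <;> simp <;> ring
    · refine (weaklyBelow_cons_append_cons_iff hAd).mpr ⟨fun p hp => ?_, hBw⟩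
      have := hAw p hp
      omega

theorem path_injective : Function.Injective (path : SPathDecomp m → List (ℤ × ℤ)) := by
  rintro (⟨A, hA⟩ | ⟨⟨⟨i, j⟩, _⟩, ⟨A, hA⟩, ⟨B, hB⟩⟩)
    (⟨A', hA'⟩ | ⟨⟨⟨i', j'⟩, _⟩, ⟨A', hA'⟩, ⟨B', hB'⟩⟩) h
    <;> simp only [path, List.cons.injEq, Prod.mk.injEq] at h
  · obtain rfl := h.2
    rfl
  · norm_num at h
  · norm_num at h
  · obtain ⟨hAs, hAsum, hAw⟩ := mem_SPath_iff.mp hA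
    obtain ⟨hBs, hBsum, hBw⟩ := mem_SPath_iff.mp hB
    obtain ⟨hAs', hAsum', hAw'⟩ := mem_SPath_iff.mp hA'
    obtain ⟨hBs', hBsum', hBw'⟩ := mem_SPath_iff.mp hB'
    obtain ⟨rfl, rfl⟩ := eq_and_eq_of_append_cons_eq hAw (by simp [hAsum]) hAw'
      (by simp [hAsum']) h.2
    obtain rfl : i = i' := by simpa using hAsum.symm.trans hAsum'
    obtain rfl : j = j' := by simpa using hBsum.symm.trans hBsum'
    rfl

theorem exists_path_eq {l : List (ℤ × ℤ)} (hl : l ∈ SPath (m + 1) (m + 1)) :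
    ∃ x : SPathDecomp m, x.path = l := by
  obtain ⟨hs, hsum, hw⟩ := mem_SPath_iff.mp hl
  rcases l with _ | ⟨s, t⟩
  · simp [Prod.ext_iff] at hsum
    omega
  obtain ⟨hs, ht⟩ := schSteps_cons.mp hs
  rcases hs with rfl | rfl | rfl
  · obtain ⟨A, B, rfl, hA, hAd⟩ := exists_eq_append_cons_of_descent ht le_rfl (by
      simp [Prod.ext_iff] at hsum
      omega)
    have hAw : weaklyBelow A := fun p hp => by simpa using hA p hp
    replace hAd : A.sum.1 = A.sum.2 := by omega
    obtain ⟨hAs, hBs⟩ := schSteps_append.mp ht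
    obtain ⟨i, hAi⟩ := exists_mem_SPath_of_sum_fst_eq_snd hAs hAw hAd
    have hAsum := (mem_SPath_iff.mp hAi).2.1
    simp only [List.sum_cons, List.sum_append, hAsum, Prod.ext_iff] at hsum
    obtain ⟨j, hBj⟩ := exists_mem_SPath_of_sum_fst_eq_snd (schSteps_cons.mp hBs).2
      ((weaklyBelow_cons_append_cons_iff hAd).mp hw).2 (by simp at hsum; omega)
    have hij : (i, j) ∈ antidiagonal m := by
      rw [HasAntidiagonal.mem_antidiagonal]
      simp [(mem_SPath_iff.mp hBj).2.1] at hsum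
      omega
    exact ⟨.inr ⟨⟨(i, j), hij⟩, ⟨A, hAi⟩, ⟨B, hBj⟩⟩, rfl⟩
  · exact absurd hw (not_weaklyBelow_append_cons (A := []) rfl)
  · refine ⟨.inl ⟨t, mem_SPath_iff.mpr ⟨ht, ?_, weaklyBelow_cons_one_one.mp hw⟩⟩, rfl⟩
    simp [Prod.ext_iff] at hsum ⊢
    omega

end SPathDecomp

theorem card_SPath_succ (m : ℕ) :
    Nat.card (SPath (m + 1) (m + 1)) = Nat.card (SPath m m) +
      ∑ p ∈ antidiagonal m, Nat.card (SPath p.1 p.1) * Nat.card (SPath p.2 p.2) := by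
  have hbij : Function.Bijective
      fun x : SPathDecomp m => (⟨x.path, x.path_mem⟩ : SPath (m + 1) (m + 1)) :=
    ⟨fun x y h => SPathDecomp.path_injective (congrArg Subtype.val h),
      fun ⟨l, hl⟩ => (SPathDecomp.exists_path_eq hl).imp fun _ hx => Subtype.ext hx⟩
  rw [← Nat.card_eq_of_bijective _ hbij, SPathDecomp, Nat.card_sum, Nat.card_sigma]
  simp only [Nat.card_prod]
  rw [Finset.sum_coe_sort (antidiagonal m)
    fun p => Nat.card (SPath p.1 p.1) * Nat.card (SPath p.2 p.2)]

/-- the large Schröder numbers (defined as counts of weakly subdiagonal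
paths with steps (1,0),(0,1),(1,1)) satisfy S(n) = S(n-1) + Σ_{i+j=n-1} S(i)·S(j). -/
theorem schroeder_recurrence
    (S : ℕ → ℕ) (hS : ∀ n : ℕ, S n = Nat.card ↥(SPath n n)) :
    ∀ n : ℕ, 1 ≤ n →
      S n = S (n - 1) + ∑ i ∈ Finset.range n, S i * S (n - 1 - i) := by
  intro n hn
  obtain ⟨m, rfl⟩ := Nat.exists_eq_add_of_le' hn
  simp only [hS, Nat.add_sub_cancel]
  rw [card_SPath_succ, Nat.sum_antidiagonal_eq_sum_range_succ_mk]
end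

section
/- The total number of paths from (0,0) to all points (i, n−2i) for i = 0,…,⌊n/2⌋ in the lattice L_CS equals the coefficient of x^n in F(x³)·(1/(1 − x·S(x³)) + 1/(1 − x²·C(x³)) − 1). -/
open Finset PowerSeries

/-!
Weight the point `(i, j)` by `x ^ (2 * i + j)` and group the points by the line `j = i + c` they
lie on, with generating function `Φ_c`. Classifying paths by their last step gives
`Φ_c = x Φ_(c-1) + x² Φ_(c+1) + [c > 0] x³ Φ_c` for `c ≠ 0`, a recursion that determines the
family from `Φ_0 = F(x³)`. Since `S = 1 + x S + x S²` and `C = 1 + x C²`, the family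
`F(x³) (x S(x³))^c`, `F(x³) (x² C(x³))^(-c)` satisfies the same recursion, so it is `Φ`. The
points `(i, n - 2i)` are the points of weight `n`, hence the total is `[x^n] ∑_c Φ_c`, and the two
geometric series give the right-hand side.
-/

def AllowedStep (D : ℤ × ℤ → Prop) (p s : ℤ × ℤ) : Prop :=
  s = (1, 0) ∨ s = (0, 1) ∨ (s = (1, 1) ∧ D p)

def pathsTo (D : ℤ × ℤ → Prop) (q : ℤ × ℤ) : Set (List (ℤ × ℤ)) :=
  {l | okFrom D 0 l ∧ l.sum = q}

theorem disjoint_image_append_singleton {α : Type*} {s t : α} (h : s ≠ t) (T U : Set (List α)) :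
    Disjoint ((· ++ [s]) '' T) ((· ++ [t]) '' U) := by
  rw [Set.disjoint_left]
  rintro _ ⟨m, -, rfl⟩ ⟨m', -, h'⟩
  exact h (List.singleton_inj.1 (List.append_inj' h' rfl).2).symm

section Paths

variable {D : ℤ × ℤ → Prop}

theorem okFrom_cons {p s : ℤ × ℤ} {l : List (ℤ × ℤ)} :
    okFrom D p (s :: l) ↔ AllowedStep D p s ∧ okFrom D (p + s) l := Iff.rfl

theorem okFrom_append {p : ℤ × ℤ} {l₁ l₂ : List (ℤ × ℤ)} :
    okFrom D p (l₁ ++ l₂) ↔ okFrom D p l₁ ∧ okFrom D (p + l₁.sum) l₂ := by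
  induction l₁ generalizing p with
  | nil => simp [okFrom]
  | cons s l ih => simp [okFrom_cons, ih, add_assoc, and_assoc]

theorem okFrom_append_singleton {p s : ℤ × ℤ} {l : List (ℤ × ℤ)} :
    okFrom D p (l ++ [s]) ↔ okFrom D p l ∧ AllowedStep D (p + l.sum) s := by
  simp [okFrom_append, okFrom, AllowedStep]

theorem schSteps_of_okFrom {p : ℤ × ℤ} {l : List (ℤ × ℤ)} (h : okFrom D p l) : schSteps l := by
  induction l generalizing p with
  | nil => simp [schSteps]
  | cons s l ih =>
    rw [okFrom_cons] at h
    refine List.forall_mem_cons.2 ⟨?_, ih h.2⟩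
    rcases h.1 with hs | hs | ⟨hs, -⟩ <;> simp [hs]

theorem sum_bounds_of_schSteps {l : List (ℤ × ℤ)} (h : schSteps l) :
    0 ≤ l.sum.1 ∧ 0 ≤ l.sum.2 ∧ (l.length : ℤ) ≤ l.sum.1 + l.sum.2 := by
  induction l with
  | nil => simp
  | cons s l ih =>
    obtain ⟨hs, hl⟩ := List.forall_mem_cons.1 h
    have := ih hl
    rcases hs with rfl | rfl | rfl <;>
      simp only [List.sum_cons, List.length_cons, Prod.fst_add, Prod.snd_add] <;> push_cast <;> omega

theorem pathsTo_finite (q : ℤ × ℤ) : (pathsTo D q).Finite := by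
  let steps : Set (ℤ × ℤ) := {(1, 0), (0, 1), (1, 1)}
  have : Finite steps := Set.toFinite _
  refine ((List.finite_length_le steps (q.1 + q.2).toNat).image (List.map (↑))).subset ?_
  rintro l ⟨hok, rfl⟩
  have hl := schSteps_of_okFrom hok
  have hbound := (sum_bounds_of_schSteps hl).2.2
  lift l to List steps using hl
  rw [List.length_map] at hbound
  exact ⟨l, by simp only [Set.mem_ofPred_eq]; omega, rfl⟩

theorem pathsTo_eq_empty {q : ℤ × ℤ} (hq : q.1 < 0 ∨ q.2 < 0) : pathsTo D q = ∅ := by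
  refine Set.eq_empty_of_forall_notMem fun l ⟨hok, hl⟩ => ?_
  have := sum_bounds_of_schSteps (schSteps_of_okFrom hok)
  rw [hl] at this
  omega

theorem append_singleton_mem_pathsTo {q s : ℤ × ℤ} {m : List (ℤ × ℤ)} :
    m ++ [s] ∈ pathsTo D q ↔ m ∈ pathsTo D (q - s) ∧ AllowedStep D (q - s) s := by
  simp only [pathsTo, Set.mem_ofPred_eq, okFrom_append_singleton, List.sum_append,
    List.sum_singleton, zero_add, ← eq_sub_iff_add_eq]
  constructor
  · rintro ⟨⟨hok, hs⟩, h⟩; exact ⟨⟨hok, h⟩, h ▸ hs⟩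
  · rintro ⟨⟨hok, h⟩, hs⟩; exact ⟨⟨hok, h ▸ hs⟩, h⟩

theorem pathsTo_eq_union {q : ℤ × ℤ} (hq : q ≠ 0) :
    pathsTo D q = (· ++ [(1, 0)]) '' pathsTo D (q - (1, 0)) ∪
      (· ++ [(0, 1)]) '' pathsTo D (q - (0, 1)) ∪
      (· ++ [(1, 1)]) '' {m ∈ pathsTo D (q - (1, 1)) | D (q - (1, 1))} := by
  ext l
  constructor
  · intro hl
    obtain rfl | ⟨m, s, rfl⟩ := List.eq_nil_or_concat' l
    · exact absurd hl.2.symm hq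
    obtain ⟨hm, hs | hs | ⟨hs, hD⟩⟩ := append_singleton_mem_pathsTo.1 hl <;> subst hs
    · exact .inl (.inl ⟨m, hm, rfl⟩)
    · exact .inl (.inr ⟨m, hm, rfl⟩)
    · exact .inr ⟨m, ⟨hm, hD⟩, rfl⟩
  · rintro ((⟨m, hm, rfl⟩ | ⟨m, hm, rfl⟩) | ⟨m, ⟨hm, hD⟩, rfl⟩) <;>
      exact append_singleton_mem_pathsTo.2 ⟨hm, by simp [AllowedStep, *]⟩

theorem ncard_pathsTo {q : ℤ × ℤ} (hq : q ≠ 0) :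
    (pathsTo D q).ncard = (pathsTo D (q - (1, 0))).ncard + (pathsTo D (q - (0, 1))).ncard +
      {m ∈ pathsTo D (q - (1, 1)) | D (q - (1, 1))}.ncard := by
  have hinj (s : ℤ × ℤ) : Function.Injective (· ++ [s]) := List.append_left_injective _
  have hfin (s : ℤ × ℤ) : ((· ++ [s]) '' pathsTo D (q - s)).Finite := (pathsTo_finite _).image _
  rw [pathsTo_eq_union hq, Set.ncard_union_eq _ ((hfin _).union (hfin _))
      (((pathsTo_finite _).sep _).image _),
    Set.ncard_union_eq (disjoint_image_append_singleton (by decide) _ _) (hfin _) (hfin _),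
    Set.ncard_image_of_injective _ (hinj _), Set.ncard_image_of_injective _ (hinj _),
    Set.ncard_image_of_injective _ (hinj _)]
  exact Disjoint.union_left (disjoint_image_append_singleton (by decide) _ _)
    (disjoint_image_append_singleton (by decide) _ _)

end Paths

noncomputable def lcsCount (i j : ℤ) : ℕ := (pathsTo (fun p => p.1 ≤ p.2) (i, j)).ncard

theorem natCard_LCS (a b : ℕ) : Nat.card (LCS a b) = lcsCount a b := by
  rw [Nat.card_coe_set_eq, lcsCount]
  congr 1
  ext l
  simp only [LCS, pathsTo, endPt_eq_sum]
  rfl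

theorem lcsCount_eq_zero {i j : ℤ} (h : i < 0 ∨ j < 0) : lcsCount i j = 0 := by
  simp [lcsCount, pathsTo_eq_empty (q := (i, j)) h]

theorem lcsCount_rec {i j : ℤ} (h : (i, j) ≠ 0) :
    lcsCount i j = lcsCount (i - 1) j + lcsCount i (j - 1) +
      if i ≤ j then lcsCount (i - 1) (j - 1) else 0 := by
  rw [lcsCount, ncard_pathsTo h]
  simp only [Prod.mk_sub_mk, sub_zero, sub_le_sub_iff_right]
  split_ifs <;> simp [lcsCount, *]

/-- Weighting the point `(i, j)` by `x ^ (2 * i + j)`, `lineCount c n` is the weight-`n`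
coefficient on the line `j = i + c`. -/
noncomputable def lineCount (c n : ℤ) : ℤ :=
  if 3 ∣ n - c then lcsCount ((n - c) / 3) ((n + 2 * c) / 3) else 0

theorem lineCount_eq {c n i j : ℤ} (hc : c = j - i) (hn : n = 2 * i + j) :
    lineCount c n = lcsCount i j := by
  subst hc hn
  rw [lineCount, if_pos ⟨i, by ring⟩]
  congr 2 <;> omega

theorem lineCount_of_neg {c n : ℤ} (hn : n < 0) : lineCount c n = 0 := by
  unfold lineCount
  split_ifs
  · exact_mod_cast lcsCount_eq_zero (by omega)
  · rfl

theorem lineCount_rec {c : ℤ} (hc : c ≠ 0) (n : ℤ) :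
    lineCount c n = lineCount (c - 1) (n - 1) + lineCount (c + 1) (n - 2) +
      if 0 < c then lineCount c (n - 3) else 0 := by
  by_cases h3 : 3 ∣ n - c
  · obtain ⟨i, hi⟩ := h3
    obtain ⟨j, rfl, rfl⟩ : ∃ j, c = j - i ∧ n = 2 * i + j := ⟨n - 2 * i, by omega, by omega⟩
    rw [lineCount_eq rfl rfl, lineCount_eq (i := i) (j := j - 1) (by ring) (by ring),
      lineCount_eq (i := i - 1) (j := j) (by ring) (by ring),
      lineCount_eq (i := i - 1) (j := j - 1) (by ring) (by ring),
      lcsCount_rec (by simp only [ne_eq, Prod.ext_iff, Prod.fst_zero, Prod.snd_zero]; omega),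
      if_congr (show 0 < j - i ↔ i ≤ j by omega) rfl rfl]
    push_cast
    ring
  · simp only [lineCount, if_neg h3, if_neg (show ¬ 3 ∣ n - 1 - (c - 1) by omega),
      if_neg (show ¬ 3 ∣ n - 2 - (c + 1) by omega), if_neg (show ¬ 3 ∣ n - 3 - c by omega),
      ite_self, add_zero]

/-- A path to a point of the line `j = i + c`, `c ≠ 0`, ends with a step from line `c - 1` or
`c + 1`, or, only when `c > 0`, with a diagonal step from line `c` itself. -/
def SatisfiesLineRec {R : Type*} [Semiring R] (P : ℤ → R⟦X⟧) : Prop :=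
  ∀ c ≠ 0, P c = X * P (c - 1) + X ^ 2 * P (c + 1) + if 0 < c then X ^ 3 * P c else 0

theorem SatisfiesLineRec.unique {R : Type*} [Semiring R] {P Q : ℤ → R⟦X⟧}
    (hP : SatisfiesLineRec P) (hQ : SatisfiesLineRec Q) (h0 : P 0 = Q 0) : P = Q := by
  funext c
  ext n
  induction n using Nat.strong_induction_on generalizing c with
  | _ n ih =>
    rcases eq_or_ne c 0 with rfl | hc
    · rw [h0]
    have shift (k : ℕ) (hk : 0 < k) (c : ℤ) : coeff n (X ^ k * P c) = coeff n (X ^ k * Q c) := by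
      rw [coeff_X_pow_mul', coeff_X_pow_mul']
      split_ifs
      · exact ih _ (by omega) c
      · rfl
    have shift₁ := shift 1 one_pos (c - 1)
    rw [pow_one] at shift₁
    rw [hP c hc, hQ c hc, map_add, map_add, map_add, map_add, shift₁, shift 2 two_pos]
    split_ifs
    · rw [shift 3 three_pos]
    · rfl

noncomputable def lineGF (c : ℤ) : ℤ⟦X⟧ := mk fun n => lineCount c n

theorem coeff_lineGF (n : ℕ) (c : ℤ) : coeff n (lineGF c) = lineCount c n := coeff_mk _ _

theorem coeff_X_pow_mul_lineGF (k n : ℕ) (c : ℤ) :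
    coeff n (X ^ k * lineGF c) = lineCount c (n - k) := by
  rw [coeff_X_pow_mul']
  split_ifs with h
  · rw [coeff_lineGF, Nat.cast_sub h]
  · rw [lineCount_of_neg (by omega)]

theorem satisfiesLineRec_lineGF : SatisfiesLineRec lineGF := by
  intro c hc
  ext n
  have h1 := coeff_X_pow_mul_lineGF 1 n (c - 1)
  rw [pow_one] at h1
  rw [map_add, map_add, h1, coeff_X_pow_mul_lineGF, coeff_lineGF, lineCount_rec hc]
  split_ifs
  · rw [coeff_X_pow_mul_lineGF]; push_cast; rfl
  · simp only [add_zero, Nat.cast_one, Nat.cast_ofNat, map_zero]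

theorem subCube_eq_expand (g : ℤ⟦X⟧) : subCube g = expand 3 three_ne_zero g := by
  ext n
  rw [coeff_expand, subCube, coeff_mk]

theorem schroederGF_eq : schroederGF = 1 + X * schroederGF + X * schroederGF ^ 2 := by
  ext (_ | n)
  · simp [schroederGF, schroeder]
  · rw [map_add, map_add, coeff_one, if_neg n.succ_ne_zero, coeff_succ_X_mul, coeff_succ_X_mul,
      sq, coeff_mul, Nat.sum_antidiagonal_eq_sum_range_succ_mk]
    simp only [schroederGF, coeff_mk, zero_add, schroeder]
    push_cast
    rw [Fin.sum_univ_eq_sum_range (fun i => (schroeder i : ℤ) * schroeder (n - i))]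

theorem catalanGF_eq : catalanGF = 1 + X * catalanGF ^ 2 := by
  ext (_ | n)
  · simp [catalanGF]
  · rw [map_add, coeff_one, if_neg n.succ_ne_zero, coeff_succ_X_mul, sq, coeff_mul,
      Nat.sum_antidiagonal_eq_sum_range_succ_mk]
    have hs := catalan_succ' n
    rw [Nat.sum_antidiagonal_eq_sum_range_succ_mk] at hs
    simp only [catalanGF, coeff_mk, zero_add, hs]
    push_cast
    rfl

/-- `F(x³) (x S(x³))^c` for `c ≥ 0` and `F(x³) (x² C(x³))^(-c)` for `c ≤ 0`. -/
noncomputable def closedLineGF (c : ℤ) : ℤ⟦X⟧ :=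
  subCube FGF * (X * subCube schroederGF) ^ c.toNat * (X ^ 2 * subCube catalanGF) ^ (-c).toNat

theorem closedLineGF_zero : closedLineGF 0 = subCube FGF := by
  simp [closedLineGF]

theorem closedLineGF_natCast (k : ℕ) :
    closedLineGF k = subCube FGF * (X * subCube schroederGF) ^ k := by
  simp [closedLineGF]

theorem closedLineGF_neg_natCast (k : ℕ) :
    closedLineGF (-k) = subCube FGF * (X ^ 2 * subCube catalanGF) ^ k := by
  simp [closedLineGF]

theorem satisfiesLineRec_closedLineGF : SatisfiesLineRec closedLineGF := by
  set A : ℤ⟦X⟧ := X * subCube schroederGF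
  set B : ℤ⟦X⟧ := X ^ 2 * subCube catalanGF
  have hA : A = X + X ^ 2 * A ^ 2 + X ^ 3 * A := by
    simp only [A, subCube_eq_expand]
    conv_lhs => rw [schroederGF_eq]
    simp only [map_add, map_mul, map_pow, map_one, expand_X]
    ring
  have hB : B = X ^ 2 + X * B ^ 2 := by
    simp only [B, subCube_eq_expand]
    conv_lhs => rw [catalanGF_eq]
    simp only [map_add, map_mul, map_pow, map_one, expand_X]
    ring
  intro c hc
  obtain ⟨k, rfl | rfl⟩ := Int.eq_nat_or_neg c
  · obtain ⟨k, rfl⟩ : ∃ m, k = m + 1 := ⟨k - 1, by omega⟩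
    rw [if_pos (by omega), show ((k + 1 : ℕ) : ℤ) - 1 = k by push_cast; ring,
      show ((k + 1 : ℕ) : ℤ) + 1 = (k + 2 : ℕ) by push_cast; ring]
    simp only [closedLineGF_natCast]
    linear_combination (subCube FGF * A ^ k) * hA
  · obtain ⟨k, rfl⟩ : ∃ m, k = m + 1 := ⟨k - 1, by omega⟩
    rw [if_neg (by omega), show -((k + 1 : ℕ) : ℤ) - 1 = -(k + 2 : ℕ) by push_cast; ring,
      show -((k + 1 : ℕ) : ℤ) + 1 = -k by push_cast; ring]
    simp only [closedLineGF_neg_natCast]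
    linear_combination (subCube FGF * B ^ k) * hB

theorem lineGF_zero : lineGF 0 = closedLineGF 0 := by
  ext n
  rw [closedLineGF_zero, coeff_lineGF, lineCount, subCube, coeff_mk, FGF, coeff_mk, fCS, natCard_LCS]
  push_cast
  simp only [sub_zero, add_zero]
  norm_cast

theorem lineGF_eq_closedLineGF : lineGF = closedLineGF :=
  satisfiesLineRec_lineGF.unique satisfiesLineRec_closedLineGF lineGF_zero

theorem coeff_mul_invOfUnit_one_sub {R : Type*} [CommRing R] {A : R⟦X⟧}
    (hA : constantCoeff A = 0) (G : R⟦X⟧) (n : ℕ) :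
    coeff n (G * (1 - A).invOfUnit 1) = ∑ c ∈ range (n + 1), coeff n (G * A ^ c) := by
  set I := (1 - A).invOfUnit 1
  have hinv : (1 - A) * I = 1 := mul_invOfUnit _ _ (by simp [hA])
  have hI : I = ∑ c ∈ range (n + 1), A ^ c + A ^ (n + 1) * I := by
    linear_combination (∑ c ∈ range (n + 1), A ^ c) * hinv + I * geom_sum_mul A (n + 1)
  have htail : X ^ (n + 1) ∣ G * (A ^ (n + 1) * I) :=
    dvd_mul_of_dvd_right (dvd_mul_of_dvd_left (pow_dvd_pow_of_dvd (X_dvd_iff.2 hA) _) _) _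
  rw [hI, mul_add, map_add, X_pow_dvd_iff.1 htail n (lt_add_one n), add_zero, mul_sum, map_sum]

theorem sum_range_add_sum_range_neg {M : Type*} [AddCommMonoid M] (f : ℤ → M) (n : ℕ) :
    ∑ c ∈ range (n + 1), f c + ∑ c ∈ range (n + 1), f (-c) = f 0 + ∑ c ∈ Icc (-n : ℤ) n, f c := by
  induction n with
  | zero => simp
  | succ n ih =>
    have hIcc : Icc (-(n + 1 : ℕ) : ℤ) (n + 1 : ℕ) =
        insert (-(n + 1 : ℤ)) (insert ((n : ℤ) + 1) (Icc (-n : ℤ) n)) := by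
      ext; simp only [mem_Icc, mem_insert]; push_cast; omega
    rw [sum_range_succ, sum_range_succ (fun c : ℕ => f (-c)), add_add_add_comm, ih, hIcc,
      sum_insert (by simp only [mem_insert, mem_Icc]; omega), sum_insert (by simp)]
    push_cast
    abel

theorem sum_Icc_lineCount (n : ℕ) :
    ∑ c ∈ Icc (-n : ℤ) n, lineCount c n =
      ∑ i ∈ range (n / 2 + 1), (Nat.card (LCS i (n - 2 * i)) : ℤ) := by
  symm
  refine sum_of_injOn (fun i : ℕ => (n : ℤ) - 3 * i) ?_ ?_ ?_ ?_
  · intro a _ b _ h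
    simp only at h
    omega
  · intro i hi
    simp only [coe_range, Set.mem_Iio, coe_Icc, Set.mem_Icc] at hi ⊢
    omega
  · intro c hc hc'
    by_cases h3 : 3 ∣ (n : ℤ) - c
    · obtain ⟨i, hi⟩ := h3
      rw [lineCount_eq (i := i) (j := n - 2 * i) (by omega) (by ring)]
      refine Int.natCast_eq_zero.2 (lcsCount_eq_zero ?_)
      by_contra! h
      refine hc' ⟨i.toNat, ?_, ?_⟩ <;> simp only [coe_range, Set.mem_Iio] <;> omega
    · exact if_neg h3
  · intro i hi
    simp only [mem_range] at hi
    rw [natCard_LCS, lineCount_eq (i := i) (j := n - 2 * i) (by ring) (by ring),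
      Nat.cast_sub (by omega)]
    push_cast
    rfl

/-- the total number of paths from (0,0) to the points (i, n−2i),
i = 0,…,⌊n/2⌋, in L_CS equals
[x^n] F(x³)·(1/(1 − x·S(x³)) + 1/(1 − x²·C(x³)) − 1). -/
theorem LCS_slope_total (n : ℕ) :
    ((∑ i ∈ Finset.range (n / 2 + 1), Nat.card ↥(LCS i (n - 2 * i))) : ℤ) =
      PowerSeries.coeff (R := ℤ) n
        (subCube FGF *
          ((1 - PowerSeries.X * subCube schroederGF).invOfUnit 1 +
           (1 - PowerSeries.X ^ 2 * subCube catalanGF).invOfUnit 1 - 1)) := by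
  have hS : constantCoeff (X * subCube schroederGF) = 0 := by simp
  have hC : constantCoeff (X ^ 2 * subCube catalanGF) = 0 := by simp
  rw [mul_sub, mul_add, mul_one, map_sub, map_add, coeff_mul_invOfUnit_one_sub hS,
    coeff_mul_invOfUnit_one_sub hC]
  simp_rw [← closedLineGF_natCast, ← closedLineGF_neg_natCast, ← closedLineGF_zero]
  rw [sum_range_add_sum_range_neg (fun c => coeff n (closedLineGF c)), add_sub_cancel_left,
    ← lineGF_eq_closedLineGF]
  simp_rw [coeff_lineGF]
  rw [sum_Icc_lineCount]
end
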